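/- The Poisson binomial PMF admits the discrete Fourier transform representation: $\Pr[S = k] = \frac{1}{N+1}\sum_{\ell=0}^{N} \mathcal{C}^{-k\ell}\prod_{n=1}^{N}\left[1 + (\mathcal{C}^{\ell}-1)(1-\mathfrak{p}_n)\right]$, where $\mathcal{C} = \exp\left(\frac{2\pi j}{N+1}\right)$ is a primitive $(N+1)$-th root of unity. -/

import Mathlib

open MeasureTheory ProbabilityTheory Finset Complex

/-!
Since `S` counts the `n` with `Z n = 1`, it is an `ℕ`-valued variable bounded by `N`, so it is
determined by its generating function `w ↦ 𝔼[w ^ S]` sampled at the `(N + 1)`-th roots of unity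
`w = C ^ ℓ`: orthogonality of the characters `ℓ ↦ C ^ (m * ℓ)` of `ℤ/(N + 1)` extracts the
coefficient of `w ^ k`. By independence, `𝔼[w ^ S] = ∏ n, (1 + (w - 1) Pr[Z n = 1])`.
-/

theorem IsPrimitiveRoot.sum_zpow_neg_mul_mul_pow {K : Type*} [Field K] {ζ : K} {n : ℕ}
    (hζ : IsPrimitiveRoot ζ n) {m k : ℕ} (hm : m < n) (hk : k < n) :
    ∑ ℓ ∈ range n, ζ ^ (-(k * ℓ : ℤ)) * (ζ ^ ℓ) ^ m = if m = k then (n : K) else 0 := by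
  have hζ0 : ζ ≠ 0 := hζ.ne_zero (by omega)
  have hterm : ∀ ℓ : ℕ, ζ ^ (-(k * ℓ : ℤ)) * (ζ ^ ℓ) ^ m = (ζ ^ ((m : ℤ) - k)) ^ ℓ := by
    intro ℓ
    rw [← pow_mul, ← zpow_natCast ζ (ℓ * m), ← zpow_add₀ hζ0, ← zpow_natCast, ← zpow_mul]
    push_cast
    ring_nf
  simp_rw [hterm]
  split_ifs with hmk
  · simp [hmk]
  · have hne : ζ ^ ((m : ℤ) - k) ≠ 1 := by
      rw [Ne, hζ.zpow_eq_one_iff_dvd]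
      intro hdvd
      have := Int.eq_zero_of_dvd_of_natAbs_lt_natAbs hdvd (by omega)
      omega
    have hpow : (ζ ^ ((m : ℤ) - k)) ^ n = 1 := by
      rw [← zpow_natCast, ← zpow_mul, mul_comm, zpow_mul, zpow_natCast, hζ.pow_eq_one, one_zpow]
    rw [geom_sum_eq hne, hpow, sub_self, zero_div]

theorem measureReal_eq_dft_of_le {Ω : Type*} [MeasurableSpace Ω] (μ : Measure Ω)
    [IsFiniteMeasure μ] {M : Ω → ℕ} (hM : Measurable M) {N : ℕ} (hMN : ∀ ω, M ω ≤ N)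
    {ζ : ℂ} (hζ : IsPrimitiveRoot ζ (N + 1)) {k : ℕ} (hk : k ≤ N) :
    (μ.real {ω | M ω = k} : ℂ)
      = 1 / (N + 1) * ∑ ℓ ∈ range (N + 1), ζ ^ (-(k * ℓ : ℤ)) * ∫ ω, (ζ ^ ℓ) ^ M ω ∂μ := by
  have hint : ∀ ℓ : ℕ, Integrable (fun ω => (ζ ^ ℓ) ^ M ω) μ := fun ℓ =>
    .of_bound ((measurable_from_top.comp hM).aestronglyMeasurable) 1 (ae_of_all _ fun ω => by
      simp [norm_pow, hζ.norm'_eq_one N.succ_ne_zero])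
  have hsum : ∑ ℓ ∈ range (N + 1), ζ ^ (-(k * ℓ : ℤ)) * ∫ ω, (ζ ^ ℓ) ^ M ω ∂μ
      = ∫ ω, {ω | M ω = k}.indicator (fun _ => ((N : ℂ) + 1)) ω ∂μ := by
    simp_rw [← integral_const_mul]
    rw [← integral_finsetSum _ fun ℓ _ => (hint ℓ).const_mul _]
    congr 1 with ω
    rw [hζ.sum_zpow_neg_mul_mul_pow (Nat.lt_succ_of_le (hMN ω)) (Nat.lt_succ_of_le hk)]
    simp [Set.indicator_apply]
  rw [hsum, integral_indicator_const _ (measurableSet_eq_fun hM measurable_const),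
    Complex.real_smul]
  field_simp

theorem ProbabilityTheory.iIndepFun.integral_pow_card_eq_prod {Ω ι : Type*} [Fintype ι]
    [MeasurableSpace Ω] (μ : Measure Ω) {Z : ι → Ω → ℝ} (hZ : ∀ i, Measurable (Z i))
    (hind : iIndepFun Z μ) (w : ℂ) :
    ∫ ω, w ^ #{i | Z i ω = 1} ∂μ = ∏ i, (1 + (w - 1) * μ.real {ω | Z i ω = 1}) := by
  have := hind.isProbabilityMeasure
  have hf : Measurable fun x : ℝ => if x = 1 then w else 1 :=
    Measurable.ite (measurableSet_singleton 1) measurable_const measurable_const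
  calc ∫ ω, w ^ #{i | Z i ω = 1} ∂μ
      = ∫ ω, ∏ i, (if Z i ω = 1 then w else 1) ∂μ := by simp [prod_ite]
    _ = ∏ i, ∫ ω, (if Z i ω = 1 then w else 1) ∂μ :=
        hind.integral_fun_prod_comp (fun i => (hZ i).aemeasurable)
          (fun _ => hf.aestronglyMeasurable)
    _ = ∏ i, (1 + (w - 1) * μ.real {ω | Z i ω = 1}) := by
        refine prod_congr rfl fun i _ => ?_
        have hs : MeasurableSet {ω | Z i ω = 1} := measurableSet_eq_fun (hZ i) measurable_const
        have hite : (fun ω => if Z i ω = 1 then w else 1)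
            = fun ω => 1 + {ω | Z i ω = 1}.indicator (fun _ => w - 1) ω := by
          ext ω
          by_cases h : Z i ω = 1 <;> simp [h]
        rw [hite, integral_add (integrable_const _) ((integrable_const _).indicator hs),
          integral_indicator_const _ hs]
        simp [Complex.real_smul, mul_comm]

theorem sum_eq_card_filter_eq_one {ι : Type*} [Fintype ι] {x : ι → ℝ}
    (hx : ∀ i, x i = 0 ∨ x i = 1) : ∑ i, x i = #{i | x i = 1} := by
  rw [← sum_boole]
  refine sum_congr rfl fun i _ => ?_
  rcases hx i with h | h <;> simp [h]

theorem stmt4_general {Ω : Type*} [MeasurableSpace Ω] (μ : Measure Ω) [IsProbabilityMeasure μ]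
    (N : ℕ) (Z : Fin N → Ω → ℝ) (hmeas : ∀ n, Measurable (Z n))
    (hval : ∀ n ω, Z n ω = 0 ∨ Z n ω = 1)
    (p : Fin N → ℝ) (hp : ∀ n, p n ∈ Set.Icc (0:ℝ) 1)
    (hind : iIndepFun Z μ)
    (hpz : ∀ n, μ {ω | Z n ω = 1} = ENNReal.ofReal (1 - p n))
    (k : ℕ) (hk : k ≤ N)
    (C : ℂ) (hC : C = Complex.exp (2 * Real.pi * Complex.I / (N + 1))) :
    ((μ {ω | ∑ n, Z n ω = (k : ℝ)}).toReal : ℂ)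
      = (1 / (N + 1)) * ∑ ℓ ∈ range (N + 1),
          C ^ (-(k * ℓ : ℤ)) * ∏ n : Fin N, (1 + (C ^ ℓ - 1) * (1 - (p n : ℂ))) := by
  have hCprim : IsPrimitiveRoot C (N + 1) := by
    simpa [hC] using Complex.isPrimitiveRoot_exp (N + 1) N.succ_ne_zero
  have hcount : Measurable fun ω => #{n | Z n ω = 1} := by
    simp only [card_filter]
    exact Finset.measurable_sum _ fun n _ => Measurable.ite
      (measurableSet_eq_fun (hmeas n) measurable_const) measurable_const measurable_const
  have hevent : {ω | ∑ n, Z n ω = (k : ℝ)} = {ω | #{n | Z n ω = 1} = k} := by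
    ext ω
    simp [sum_eq_card_filter_eq_one (hval · ω)]
  have hprob : ∀ n, μ.real {ω | Z n ω = 1} = 1 - p n := fun n => by
    rw [measureReal_def, hpz, ENNReal.toReal_ofReal (sub_nonneg.mpr (hp n).2)]
  have hcount_le : ∀ ω, #{n | Z n ω = 1} ≤ N := fun ω =>
    (card_le_univ _).trans_eq (Fintype.card_fin N)
  rw [hevent, ← measureReal_def, measureReal_eq_dft_of_le μ hcount hcount_le hCprim hk]
  simp_rw [hind.integral_pow_card_eq_prod μ hmeas, hprob]
  push_cast
  rfl

/-- DFT representation of the Poisson binomial PMF: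
`Pr[S = k] = (1/(N+1)) ∑_{ℓ=0}^{N} C^{-kℓ} ∏_{n=1}^{N} [1 + (C^ℓ - 1)(1 - p n)]`
where `C = exp(2πi/(N+1))`. -/
theorem stmt4 {Ω : Type*} [MeasurableSpace Ω] (μ : Measure Ω) [IsProbabilityMeasure μ]
    (N : ℕ) (hN : 1 ≤ N) (Z : Fin N → Ω → ℝ) (hmeas : ∀ n, Measurable (Z n))
    (hval : ∀ n ω, Z n ω = 0 ∨ Z n ω = 1)
    (p : Fin N → ℝ) (hp : ∀ n, p n ∈ Set.Icc (0:ℝ) 1)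
    (hind : iIndepFun Z μ)
    (hpz : ∀ n, μ {ω | Z n ω = 1} = ENNReal.ofReal (1 - p n))
    (k : ℕ) (hk : k ≤ N)
    (C : ℂ) (hC : C = Complex.exp (2 * Real.pi * Complex.I / (N + 1))) :
    ((μ {ω | ∑ n, Z n ω = (k : ℝ)}).toReal : ℂ)
      = (1 / (N + 1)) * ∑ ℓ ∈ range (N + 1),
          C ^ (-(k * ℓ : ℤ)) * ∏ n : Fin N, (1 + (C ^ ℓ - 1) * (1 - (p n : ℂ))) :=
  stmt4_general μ N Z hmeas hval p hp hind hpz k hk C hC
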